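/- Let Δ be an M,N-invariant set fitting (0^M, 0^N), let r be the least element of Δ, and set Δ' := {i − (r − M − N + 1) : i ∈ Δ}. Then area(Δ') = area(Δ) − (r − M − N) and pdinv(Δ') = pdinv(Δ). -/
import Mathlib


/-- The alphabet {0, 1, •}. -/
inductive Symb where
  | zero : Symb
  | one : Symb
  | bullet : Symb
deriving DecidableEq

/-- An `M,N`-invariant set: a subset of ℕ with finite complement,
closed under adding `M` and adding `N`. -/
def Invariant (M N : ℕ) (Δ : Set ℕ) : Prop :=
  {n : ℕ | n ∉ Δ}.Finite ∧ ∀ i ∈ Δ, i + M ∈ Δ ∧ i + N ∈ Δ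

/-- `c` is a north step of `Δ`: `c ∉ Δ` and `c + N ∈ Δ`. -/
def NorthStep (N : ℕ) (Δ : Set ℕ) (c : ℕ) : Prop := c ∉ Δ ∧ c + N ∈ Δ

/-- `c` is an east step of `Δ`: `c ∉ Δ` and `c + M ∈ Δ`. -/
def EastStep (M : ℕ) (Δ : Set ℕ) (c : ℕ) : Prop := c ∉ Δ ∧ c + M ∈ Δ

/-- `area Δ` is the number of `c ≥ M + N` with `c ∉ Δ`. -/
noncomputable def area (M N : ℕ) (Δ : Set ℕ) : ℕ := {c : ℕ | M + N ≤ c ∧ c ∉ Δ}.ncard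

/-- `pdinv Δ` is the number of pairs `(c, d)` with `c < d`, `M ≤ d < c + M`,
`c` a north step of `Δ`, and `d ∉ Δ`. -/
noncomputable def pdinv (M N : ℕ) (Δ : Set ℕ) : ℕ :=
  {p : ℕ × ℕ | p.1 < p.2 ∧ M ≤ p.2 ∧ p.2 < p.1 + M ∧ NorthStep N Δ p.1 ∧ p.2 ∉ Δ}.ncard

/-- `Δ` fits the pair of words `(v, w)`, where `v` has length `M` and `w` has length `N`. -/
def Fits (M N : ℕ) (Δ : Set ℕ) (v w : List Symb) : Prop :=
  v.length = M ∧ w.length = N ∧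
  (∀ (i : ℕ) (hi : i < v.length),
    (v.get ⟨i, hi⟩ = Symb.bullet ↔ i ∈ Δ) ∧
    (v.get ⟨i, hi⟩ = Symb.one ↔ NorthStep N Δ i) ∧
    (v.get ⟨i, hi⟩ = Symb.zero ↔ (i ∉ Δ ∧ i + N ∉ Δ))) ∧
  (∀ (i : ℕ) (hi : i < w.length),
    (w.get ⟨i, hi⟩ = Symb.bullet ↔ i ∈ Δ) ∧
    (w.get ⟨i, hi⟩ = Symb.one ↔ EastStep M Δ i) ∧
    (w.get ⟨i, hi⟩ = Symb.zero ↔ (i ∉ Δ ∧ i + M ∉ Δ)))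

/-- Decrement: `dec Δ = {i : ℕ | i + 1 ∈ Δ}`. -/
def dec (Δ : Set ℕ) : Set ℕ := {i : ℕ | i + 1 ∈ Δ}

/-- Let `Δ` be an `M,N`-invariant set fitting `(0^M, 0^N)`, `r` its
least element, and `Δ' = {i − (r − M − N + 1) : i ∈ Δ}`. Then
`area Δ' = area Δ − (r − M − N)` and `pdinv Δ' = pdinv Δ`. -/
theorem decrement_to_least_stats (M N : ℕ) (hM : 0 < M) (hN : 0 < N)
    (Δ : Set ℕ) (hΔ : Invariant M N Δ)
    (hfit : Fits M N Δ (List.replicate M Symb.zero) (List.replicate N Symb.zero))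
    (r : ℕ) (hr : IsLeast Δ r) :
    area M N ((fun i => i - (r - M - N + 1)) '' Δ) = area M N Δ - (r - M - N) ∧
    pdinv M N ((fun i => i - (r - M - N + 1)) '' Δ) = pdinv M N Δ := by

  obtain ⟨hv, hw, hvp, hwp⟩ := hfit
  -- facts from fitting all-zeros words
  have h1 : ∀ i, i < M → i ∉ Δ ∧ i + N ∉ Δ := by
    intro i hi
    have hi' : i < (List.replicate M Symb.zero).length := by simpa using hi
    have := (hvp i hi').2.2
    simp [List.getElem_replicate] at this
    exact this
  have h2 : ∀ i, i < N → i ∉ Δ ∧ i + M ∉ Δ := by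
    intro i hi
    have hi' : i < (List.replicate N Symb.zero).length := by simpa using hi
    have := (hwp i hi').2.2
    simp [List.getElem_replicate] at this
    exact this
  have hrΔ : r ∈ Δ := hr.1
  have hnot : ∀ d, d < r → d ∉ Δ := fun d hd hdin => absurd (hr.2 hdin) (by omega)
  -- r ≥ M + N
  have hge : M + N ≤ r := by
    by_contra h
    push_neg at h
    rcases lt_or_ge r N with h' | h'
    · exact (h2 r h').1 hrΔ
    · have : r - N < M := by omega
      have := (h1 (r - N) this).2
      rw [show r - N + N = r by omega] at this
      exact this hrΔ
  set K := r - M - N + 1 with hK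
  have hKr : M + N + K = r + 1 := by omega
  -- membership in the shifted set
  have hmem : ∀ i, i ∈ (fun i => i - K) '' Δ ↔ i + K ∈ Δ := by
    intro i
    constructor
    · rintro ⟨j, hj, rfl⟩
      have hrj : r ≤ j := hr.2 hj
      have : j - K + K = j := by omega
      rwa [this]
    · intro h
      exact ⟨i + K, h, by beta_reduce; omega⟩
  constructor
  · -- area part
    have himg : (fun c => c + K) '' {c | M + N ≤ c ∧ c ∉ (fun i => i - K) '' Δ}
        = {d | M + N + K ≤ d ∧ d ∉ Δ} := by
      ext d
      constructor
      · rintro ⟨c, ⟨hc1, hc2⟩, rfl⟩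
        exact ⟨by beta_reduce; omega, fun h => hc2 ((hmem c).2 h)⟩
      · rintro ⟨hd1, hd2⟩
        refine ⟨d - K, ⟨by omega, fun h => ?_⟩, by beta_reduce; omega⟩
        have := (hmem (d - K)).1 h
        rw [show d - K + K = d by omega] at this
        exact hd2 this
    have hinj : Function.Injective (fun c : ℕ => c + K) := fun a b h => by simp only [add_left_inj] at h; exact h
    have hsplit : {c | M + N ≤ c ∧ c ∉ Δ}
        = {d | M + N + K ≤ d ∧ d ∉ Δ} ∪ Set.Ico (M + N) r := by
      ext c
      simp only [Set.mem_setOf_eq, Set.mem_union, Set.mem_Ico]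
      constructor
      · rintro ⟨hc1, hc2⟩
        rcases lt_or_ge c r with h' | h'
        · exact Or.inr ⟨hc1, h'⟩
        · have : c ≠ r := fun h => hc2 (h ▸ hrΔ)
          exact Or.inl ⟨by omega, hc2⟩
      · rintro (⟨hc1, hc2⟩ | ⟨hc1, hc2⟩)
        · exact ⟨by omega, hc2⟩
        · exact ⟨hc1, hnot c hc2⟩
    have hfin1 : {d | M + N + K ≤ d ∧ d ∉ Δ}.Finite :=
      hΔ.1.subset (fun x hx => hx.2)
    have hfin2 : (Set.Ico (M + N) r).Finite := Set.finite_Ico _ _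
    have hdisj : Disjoint {d | M + N + K ≤ d ∧ d ∉ Δ} (Set.Ico (M + N) r) := by
      rw [Set.disjoint_left]
      rintro x ⟨hx1, _⟩ hx2
      simp only [Set.mem_Ico] at hx2
      omega
    have hIco : (Set.Ico (M + N) r).ncard = r - (M + N) := by
      rw [show Set.Ico (M + N) r = ↑(Finset.Ico (M + N) r) by simp,
        Set.ncard_coe_finset, Nat.card_Ico]
    have harea : area M N Δ = area M N ((fun i => i - K) '' Δ) + (r - (M + N)) := by
      unfold area
      rw [hsplit, Set.ncard_union_eq hdisj hfin1 hfin2, hIco,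
        ← himg, Set.ncard_image_of_injective _ hinj]
    omega
  · -- pdinv part
    have hinj : Function.Injective (fun p : ℕ × ℕ => (p.1 + K, p.2 + K)) := by
      rintro ⟨a, b⟩ ⟨c, d⟩ h
      simp only [Prod.mk.injEq] at h
      exact Prod.ext (by omega) (by omega)
    have himg : (fun p : ℕ × ℕ => (p.1 + K, p.2 + K)) ''
        {p : ℕ × ℕ | p.1 < p.2 ∧ M ≤ p.2 ∧ p.2 < p.1 + M ∧
          NorthStep N ((fun i => i - K) '' Δ) p.1 ∧ p.2 ∉ (fun i => i - K) '' Δ}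
        = {p : ℕ × ℕ | p.1 < p.2 ∧ M ≤ p.2 ∧ p.2 < p.1 + M ∧
          NorthStep N Δ p.1 ∧ p.2 ∉ Δ} := by
      ext ⟨c, d⟩
      simp only [Set.mem_image, Set.mem_setOf_eq, Prod.mk.injEq, Prod.exists]
      constructor
      · rintro ⟨a, b, ⟨hab, hMb, hbaM, ⟨hns1, hns2⟩, hbΔ⟩, h1', h2'⟩
        subst h1'; subst h2'
        refine ⟨by omega, by omega, by omega,
          ⟨fun h => hns1 ((hmem a).2 h), ?_⟩, fun h => hbΔ ((hmem b).2 h)⟩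
        have := (hmem (a + N)).1 hns2
        rwa [show a + N + K = a + K + N by omega] at this
      · rintro ⟨hcd, hMd, hdcM, ⟨hns1, hns2⟩, hdΔ⟩
        have hcK : M + K ≤ c + 1 := by
          have := hr.2 hns2
          omega
        refine ⟨c - K, d - K, ⟨by omega, by omega, by omega, ⟨?_, ?_⟩, ?_⟩,
          by omega, by omega⟩
        · intro h
          have := (hmem (c - K)).1 h
          rw [show c - K + K = c by omega] at this
          exact hns1 this
        · refine (hmem (c - K + N)).2 ?_
          rwa [show c - K + N + K = c + N by omega]
        · intro h
          have := (hmem (d - K)).1 h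
          rw [show d - K + K = d by omega] at this
          exact hdΔ this
    unfold pdinv
    rw [← himg, Set.ncard_image_of_injective _ hinj]
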